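/- arXiv:2005.13629 — 2 statements merged into one kernel-verified Lean document; each statement's English description precedes it below -/
import Mathlib

section
/- Let n, p, t be positive integers with p < n, and set r = n − p. Let P be a p×n matrix over ℚ, Q an n×p matrix over ℚ, and U_1, …, U_t diagonal n×n matrices over ℚ such that W_0 = P·Q is invertible. Set W_a = P·U_a·Q and Δ_{ab} = W_a·W_0⁻¹·W_b − W_b·W_0⁻¹·W_a for 1 ≤ a, b ≤ t. Then there exist matrices V_a ∈ ℚ^{p×r} and G_a ∈ ℚ^{r×p} for a = 1, …, t such that Δ_{ab} = V_a·G_b − V_b·G_a for all 1 ≤ a, b ≤ t. -/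
/-!
With `B = Q W₀⁻¹ P - 1` we have `P B = 0`, and `P` has rank `p` because `P Q` is invertible,
so `B` has rank at most `n - p` and factors as `B = C D` through `ℚ^(n-p)`. Expanding,
`P U_a B U_b Q = W_a W₀⁻¹ W_b - P U_a U_b Q`, and the last term is symmetric in `a, b` because
diagonal matrices commute. Hence `Δ_ab = V_a G_b - V_b G_a` with `V_a = P U_a C`, `G_b = D U_b Q`.
-/

open Matrix

lemma Matrix.exists_eq_mul_of_rank_le {K m n : Type*} [Field K] [Fintype m] [Fintype n]
    [DecidableEq n] {M : Matrix m n K} {r : ℕ} (h : M.rank ≤ r) :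
    ∃ (C : Matrix m (Fin r) K) (D : Matrix (Fin r) n K), M = C * D := by
  obtain ⟨ι, hι⟩ : ∃ ι : LinearMap.range M.mulVecLin →ₗ[K] (Fin r → K), Function.Injective ι :=
    finrank_le_iff_exists_linearMap.mp (h.trans_eq (Module.finrank_fin_fun K).symm)
  obtain ⟨π, hπ⟩ := ι.exists_leftInverse_of_injective (LinearMap.ker_eq_bot.mpr hι)
  refine ⟨LinearMap.toMatrix' (Submodule.subtype _ ∘ₗ π),
    LinearMap.toMatrix' (ι ∘ₗ M.mulVecLin.rangeRestrict), ?_⟩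
  rw [← LinearMap.toMatrix'_comp, LinearMap.comp_assoc, ← LinearMap.comp_assoc _ ι, hπ,
    LinearMap.id_comp, LinearMap.subtype_comp_codRestrict, ← Matrix.toLin'_apply',
    LinearMap.toMatrix'_toLin']

lemma Matrix.rank_mul_inv_mul_sub_one_le {K m n : Type*} [Field K] [Fintype m] [Fintype n]
    [DecidableEq m] [DecidableEq n] {P : Matrix m n K} {Q : Matrix n m K} (h : IsUnit (P * Q)) :
    (Q * (P * Q)⁻¹ * P - 1).rank ≤ Fintype.card n - Fintype.card m := by
  have hPB : P * (Q * (P * Q)⁻¹ * P - 1) = 0 := by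
    rw [Matrix.mul_sub, Matrix.mul_one, ← Matrix.mul_assoc, ← Matrix.mul_assoc,
      mul_nonsing_inv _ ((isUnit_iff_isUnit_det _).mp h), Matrix.one_mul, sub_self]
  have hP : Fintype.card m ≤ P.rank :=
    (rank_of_isUnit _ h).symm.le.trans (rank_mul_le_left P Q)
  have := rank_add_rank_le_card_of_mul_eq_zero hPB
  omega

lemma Matrix.IsDiag.commute {R n : Type*} [CommSemiring R] [Fintype n] {A B : Matrix n n R}
    (hA : A.IsDiag) (hB : B.IsDiag) : Commute A B := by
  classical
  rw [← hA.diagonal_diag, ← hB.diagonal_diag]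
  exact (Commute.all _ _).map (diagonalRingHom n R)

lemma Matrix.mul_mul_sub_mul_mul_of_commute {R n p : Type*} [Ring R] [Fintype n] [Fintype p]
    [DecidableEq n] (P : Matrix p n R) (Q : Matrix n p R) (X : Matrix p p R)
    {A B : Matrix n n R} (hAB : Commute A B) :
    P * A * Q * X * (P * B * Q) - P * B * Q * X * (P * A * Q) =
      P * A * (Q * X * P - 1) * (B * Q) - P * B * (Q * X * P - 1) * (A * Q) := by
  simp only [Matrix.mul_sub, Matrix.sub_mul, Matrix.mul_one, Matrix.mul_assoc]
  rw [← Matrix.mul_assoc B A Q, ← hAB.eq, Matrix.mul_assoc]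
  abel

theorem stmt_9_general (n p t : ℕ)
    (P : Matrix (Fin p) (Fin n) ℚ) (Q : Matrix (Fin n) (Fin p) ℚ)
    (U : Fin t → Matrix (Fin n) (Fin n) ℚ) (hU : ∀ a, (U a).IsDiag)
    (hW₀ : IsUnit (P * Q))
    (W : Fin t → Matrix (Fin p) (Fin p) ℚ) (hW : ∀ a, W a = P * U a * Q)
    (Δ : Fin t → Fin t → Matrix (Fin p) (Fin p) ℚ)
    (hΔ : ∀ a b, Δ a b = W a * (P * Q)⁻¹ * W b - W b * (P * Q)⁻¹ * W a) :
    ∃ (V : Fin t → Matrix (Fin p) (Fin (n - p)) ℚ)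
      (G : Fin t → Matrix (Fin (n - p)) (Fin p) ℚ),
      ∀ a b, Δ a b = V a * G b - V b * G a := by
  have hrank := rank_mul_inv_mul_sub_one_le hW₀
  rw [Fintype.card_fin, Fintype.card_fin] at hrank
  obtain ⟨C, D, hCD⟩ := exists_eq_mul_of_rank_le hrank
  refine ⟨fun a => P * U a * C, fun b => D * (U b * Q), fun a b => ?_⟩
  rw [hΔ, hW, hW, mul_mul_sub_mul_mul_of_commute P Q _ ((hU a).commute (hU b)), hCD]
  simp only [Matrix.mul_assoc]

theorem stmt_9 (n p t : ℕ) (hn : 0 < n) (hp : 0 < p) (ht : 0 < t) (hpn : p < n)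
    (P : Matrix (Fin p) (Fin n) ℚ) (Q : Matrix (Fin n) (Fin p) ℚ)
    (U : Fin t → Matrix (Fin n) (Fin n) ℚ) (hU : ∀ a, (U a).IsDiag)
    (hW₀ : IsUnit (P * Q))
    (W : Fin t → Matrix (Fin p) (Fin p) ℚ) (hW : ∀ a, W a = P * U a * Q)
    (Δ : Fin t → Fin t → Matrix (Fin p) (Fin p) ℚ)
    (hΔ : ∀ a b, Δ a b = W a * (P * Q)⁻¹ * W b - W b * (P * Q)⁻¹ * W a) :
    ∃ (V : Fin t → Matrix (Fin p) (Fin (n - p)) ℚ)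
      (G : Fin t → Matrix (Fin (n - p)) (Fin p) ℚ),
      ∀ a b, Δ a b = V a * G b - V b * G a :=
  stmt_9_general n p t P Q U hU hW₀ W hW Δ hΔ
end

section
/- Let n, p, t be positive integers with p < n and set r = n − p. Let P be a p×n matrix over ℚ, Q an n×p matrix over ℚ, and U_1, …, U_t diagonal n×n matrices over ℚ, such that W_0 = P·Q is invertible; set W_a = P·U_a·Q. Let B = Q·W_0⁻¹·P − 1_n and suppose B = B_1·B_2 with B_1 ∈ ℚ^{n×r} and B_2 ∈ ℚ^{r×n} of rank r. Set V_a = P·U_a·B_1 and Q′ = [Q | B_1]. Then Q′ is an invertible n×n matrix, P·Q′ = [W_0 | 0_{p×r}], and P·U_a·Q′ = [W_a | V_a] for every a = 1, …, t. -/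
open Matrix

/-!
Since `P Q (PQ)⁻¹ P = P`, we get `P B = 0`, hence `P B₁ B₂ = 0`, and
`B₂` having full row rank forces `P B₁ = 0`. The factorisation `B₁ B₂ = Q (PQ)⁻¹ P - 1` says exactly
that `[(PQ)⁻¹ P; -B₂]` is a left inverse of `Q' = [Q | B₁]`, which is square because `p ≤ n`.
-/

namespace Matrix

variable {l m n K : Type*} [Fintype m] [DecidableEq m]

theorem eq_zero_of_mul_eq_zero_of_rank_eq_card [Field K] [Finite l] [Fintype n]
    {A : Matrix l m K} {B : Matrix m n K} (hB : B.rank = Fintype.card m) (hAB : A * B = 0) :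
    A = 0 := by
  have hA : A.rank = 0 := by
    have := rank_add_rank_le_card_of_mul_eq_zero hAB
    omega
  rw [rank, Submodule.finrank_eq_zero, LinearMap.range_eq_bot] at hA
  exact Matrix.toLin'.injective (by rw [toLin'_apply', hA, map_zero])

theorem mul_mul_nonsing_inv_mul_cancel {R : Type*} [CommRing R] [Fintype n] {P : Matrix m n R}
    {Q : Matrix n m R} (hPQ : IsUnit (P * Q)) : P * (Q * (P * Q)⁻¹ * P) = P := by
  rw [← Matrix.mul_assoc, ← Matrix.mul_assoc, mul_nonsing_inv _ ((isUnit_iff_isUnit_det _).mp hPQ),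
    Matrix.one_mul]

theorem fromCols_mul_fromRows_neg_eq_one {R : Type*} [CommRing R] {p r : Type*} [Fintype p]
    [Fintype r] [DecidableEq n] {Q : Matrix n p R} {X : Matrix p n R} {B₁ : Matrix n r R}
    {B₂ : Matrix r n R} (hB : B₁ * B₂ = Q * X - 1) : fromCols Q B₁ * fromRows X (-B₂) = 1 := by
  rw [fromCols_mul_fromRows, Matrix.mul_neg, hB]
  abel

end Matrix

theorem stmt_12_general (n p t : ℕ) (hpn : p < n)
    (P : Matrix (Fin p) (Fin n) ℚ) (Q : Matrix (Fin n) (Fin p) ℚ)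
    (U : Fin t → Matrix (Fin n) (Fin n) ℚ)
    (hW₀ : IsUnit (P * Q))
    (W : Fin t → Matrix (Fin p) (Fin p) ℚ) (hW : ∀ a, W a = P * U a * Q)
    (B : Matrix (Fin n) (Fin n) ℚ) (hB : B = Q * (P * Q)⁻¹ * P - 1)
    (B₁ : Matrix (Fin n) (Fin (n - p)) ℚ) (B₂ : Matrix (Fin (n - p)) (Fin n) ℚ)
    (hfac : B = B₁ * B₂) (hB₂ : B₂.rank = n - p)
    (V : Fin t → Matrix (Fin p) (Fin (n - p)) ℚ) (hV : ∀ a, V a = P * U a * B₁)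
    (Q' : Matrix (Fin n) (Fin p ⊕ Fin (n - p)) ℚ) (hQ' : Q' = Matrix.fromCols Q B₁) :
    (∃ M : Matrix (Fin p ⊕ Fin (n - p)) (Fin n) ℚ, Q' * M = 1 ∧ M * Q' = 1) ∧
    P * Q' = Matrix.fromCols (P * Q) 0 ∧
    (∀ a, P * U a * Q' = Matrix.fromCols (W a) (V a)) := by
  subst hQ'
  have hPB₁ : P * B₁ = 0 := by
    refine eq_zero_of_mul_eq_zero_of_rank_eq_card (B := B₂) (by rw [hB₂, Fintype.card_fin]) ?_
    rw [Matrix.mul_assoc, ← hfac, hB, Matrix.mul_sub, Matrix.mul_one,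
      mul_mul_nonsing_inv_mul_cancel hW₀, sub_self]
  have hleft : fromCols Q B₁ * fromRows ((P * Q)⁻¹ * P) (-B₂) = 1 :=
    fromCols_mul_fromRows_neg_eq_one (by rw [← hfac, hB, Matrix.mul_assoc])
  have e : Fin p ⊕ Fin (n - p) ≃ Fin n := finSumFinEquiv.trans (finCongr (by omega))
  refine ⟨⟨_, hleft, (mul_eq_one_comm_of_equiv e.symm).mp hleft⟩, ?_, fun a => ?_⟩
  · rw [mul_fromCols, hPB₁]
  · rw [mul_fromCols, hW, hV]

theorem stmt_12 (n p t : ℕ) (hn : 0 < n) (hp : 0 < p) (ht : 0 < t) (hpn : p < n)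
    (P : Matrix (Fin p) (Fin n) ℚ) (Q : Matrix (Fin n) (Fin p) ℚ)
    (U : Fin t → Matrix (Fin n) (Fin n) ℚ) (hU : ∀ a, (U a).IsDiag)
    (hW₀ : IsUnit (P * Q))
    (W : Fin t → Matrix (Fin p) (Fin p) ℚ) (hW : ∀ a, W a = P * U a * Q)
    (B : Matrix (Fin n) (Fin n) ℚ) (hB : B = Q * (P * Q)⁻¹ * P - 1)
    (B₁ : Matrix (Fin n) (Fin (n - p)) ℚ) (B₂ : Matrix (Fin (n - p)) (Fin n) ℚ)
    (hfac : B = B₁ * B₂) (hB₂ : B₂.rank = n - p)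
    (V : Fin t → Matrix (Fin p) (Fin (n - p)) ℚ) (hV : ∀ a, V a = P * U a * B₁)
    (Q' : Matrix (Fin n) (Fin p ⊕ Fin (n - p)) ℚ) (hQ' : Q' = Matrix.fromCols Q B₁) :
    (∃ M : Matrix (Fin p ⊕ Fin (n - p)) (Fin n) ℚ, Q' * M = 1 ∧ M * Q' = 1) ∧
    P * Q' = Matrix.fromCols (P * Q) 0 ∧
    (∀ a, P * U a * Q' = Matrix.fromCols (W a) (V a)) :=
  stmt_12_general n p t hpn P Q U hW₀ W hW B hB B₁ B₂ hfac hB₂ V hV Q' hQ'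
end
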